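/- arXiv:2312.15096 — 2 statements merged into one kernel-verified Lean document; each statement's English description precedes it below -/
import Mathlib

section
/- Let C be a connected nonnegative configuration and let P = P(x,y,z_b,z_t) be a non-cut subpillar of C. If none of conditions (a)–(e) hold for P, then P has no adjacent pillar P' = P'(x',y',z'_b,z'_t) with z'_b > z_b. -/
/-- A cube is a point of `ℤ³`. -/
abbrev Cube : Type := ℤ × ℤ × ℤ

/-- Two cubes are adjacent if they lie at `L1`-distance `1`. -/
def cubeAdj (a b : Cube) : Prop :=
  (a.1 - b.1).natAbs + (a.2.1 - b.2.1).natAbs + (a.2.2 - b.2.2).natAbs = 1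

lemma cubeAdj_symm {a b : Cube} (h : cubeAdj a b) : cubeAdj b a := by
  unfold cubeAdj at h ⊢
  omega

lemma cubeAdj_irrefl (a : Cube) : ¬ cubeAdj a a := by
  unfold cubeAdj; simp

/-- The graph `G_S` on a set of cubes `S`, connecting adjacent cubes of `S`. -/
def gph (S : Finset Cube) : SimpleGraph Cube where
  Adj a b := a ∈ S ∧ b ∈ S ∧ cubeAdj a b
  symm := by
    constructor
    rintro a b ⟨ha, hb, h⟩
    exact ⟨hb, ha, cubeAdj_symm h⟩
  loopless := by
    constructor
    rintro a ⟨-, -, h⟩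
    exact cubeAdj_irrefl a h

/-- A set of cubes is connected if it is nonempty and all its cubes are joined by
paths of adjacent cubes inside the set. -/
def Conn (S : Finset Cube) : Prop :=
  S.Nonempty ∧ ∀ a ∈ S, ∀ b ∈ S, (gph S).Reachable a b

/-- Connected or empty. -/
def ConnOrEmpty (S : Finset Cube) : Prop := S = ∅ ∨ Conn S

/-- A configuration is nonnegative if all coordinates of all its cubes are `≥ 0`. -/
def Nonneg (C : Finset Cube) : Prop := ∀ c ∈ C, 0 ≤ c.1 ∧ 0 ≤ c.2.1 ∧ 0 ≤ c.2.2

/-- `Sq4 p q r s` : the four points form a 4-cycle `p-q-r-s-p` in the unit-distance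
graph on `ℤ³`. -/
def Sq4 (p q r s : Cube) : Prop :=
  cubeAdj p q ∧ cubeAdj q r ∧ cubeAdj r s ∧ cubeAdj s p ∧ p ≠ r ∧ q ≠ s

/-- Slide: there is a 4-cycle `c, c', r, s` with exactly the three vertices
other than `c'` in `C` (and `c` adjacent to `c'`). -/
def IsSlide (C : Finset Cube) (c c' : Cube) : Prop :=
  c ∈ C ∧ c' ∉ C ∧ ∃ r s, Sq4 c c' r s ∧ r ∈ C ∧ s ∈ C

/-- Convex transition: there is a 4-cycle `c, q, c', s` with exactly two
(adjacent) vertices in `C`, one of them `c`, and `c'` opposite to `c`. -/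
def IsConvexTrans (C : Finset Cube) (c c' : Cube) : Prop :=
  c ∈ C ∧ c' ∉ C ∧ ∃ q s, Sq4 c q c' s ∧ ((q ∈ C ∧ s ∉ C) ∨ (s ∈ C ∧ q ∉ C))

/-- A move replaces `c ∈ C` by `c' ∉ C` via a slide or a convex transition,
such that `C \ {c}` is connected. -/
def IsMoveVia (C : Finset Cube) (c c' : Cube) : Prop :=
  (IsSlide C c c' ∨ IsConvexTrans C c c') ∧ Conn (C.erase c)

/-- `C'` is obtained from `C` by a single move. -/
def MoveStep (C C' : Finset Cube) : Prop :=
  ∃ c c', IsMoveVia C c c' ∧ C' = insert c' (C.erase c)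

/-- `MoveSeq C m C'` : a sequence of `m` moves from `C` to `C'`, each resulting in a
connected configuration. -/
def MoveSeq (C : Finset Cube) (m : ℕ) (C' : Finset Cube) : Prop :=
  ∃ f : ℕ → Finset Cube, f 0 = C ∧ f m = C' ∧
    ∀ i < m, MoveStep (f i) (f (i + 1)) ∧ Conn (f (i + 1))

/-- Sum of `x`-coordinates of `C`. -/
def Xsum (C : Finset Cube) : ℤ := ∑ c ∈ C, c.1

/-- Sum of `y`-coordinates of `C`. -/
def Ysum (C : Finset Cube) : ℤ := ∑ c ∈ C, c.2.1

/-- Sum of `z`-coordinates of `C`. -/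
def Zsum (C : Finset Cube) : ℤ := ∑ c ∈ C, c.2.2

/-- A cube `c` is finished in `C` if the whole box spanned by the origin and `c`
is contained in `C`. -/
def FinishedCube (C : Finset Cube) (c : Cube) : Prop :=
  ∀ p : Cube, 0 ≤ p.1 → p.1 ≤ c.1 → 0 ≤ p.2.1 → p.2.1 ≤ c.2.1 →
    0 ≤ p.2.2 → p.2.2 ≤ c.2.2 → p ∈ C

/-- A finished configuration: nonnegative and all cubes finished. -/
def FinishedConfig (C : Finset Cube) : Prop :=
  Nonneg C ∧ ∀ c ∈ C, FinishedCube C c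

/-- The weight of a cube. -/
def weight (c : Cube) : ℤ :=
  if 1 < c.2.2 then 5
  else if c.2.2 = 1 then 4
  else if 1 < c.2.1 then 3
  else if c.2.1 = 1 then 2
  else 1

/-- The potential of a cube `(x, y, z)` is `w • (x + 2y + 4z)`. -/
def pot (c : Cube) : ℤ := weight c * (c.1 + 2 * c.2.1 + 4 * c.2.2)

/-- The potential of a configuration. -/
def Pot (C : Finset Cube) : ℤ := ∑ c ∈ C, pot c

/-- `SafeSeq C K` : `C` admits a sequence of `m ≥ 1` moves, each resulting in a connected
configuration, ending in a nonnegative configuration `C'` of strictly smaller potential,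
with `m ≤ K • (Π_C - Π_{C'})`. -/
def SafeSeq (C : Finset Cube) (K : ℕ) : Prop :=
  ∃ (m : ℕ) (C' : Finset Cube), 1 ≤ m ∧ MoveSeq C m C' ∧ Nonneg C' ∧
    Pot C' < Pot C ∧ (m : ℤ) ≤ (K : ℤ) * (Pot C - Pot C')

/-- The set of cubes `{x} × {y} × {z_b, …, z_t}`. -/
noncomputable def pillarSet (x y zb zt : ℤ) : Finset Cube :=
  (Finset.Icc zb zt).image fun z => (x, y, z)

/-- `P(x,y,z_b,z_t)` is a subpillar of `S`. -/
def IsSubpillar (S : Finset Cube) (x y zb zt : ℤ) : Prop :=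
  zb ≤ zt ∧ pillarSet x y zb zt ⊆ S

/-- A pillar of `S`: a maximal subpillar. -/
def IsPillar (S : Finset Cube) (x y zb zt : ℤ) : Prop :=
  IsSubpillar S x y zb zt ∧ (x, y, zb - 1) ∉ S ∧ (x, y, zt + 1) ∉ S

/-- `(x', y')` is one of the four sides of the column `(x, y)`. -/
def IsSide (x y x' y' : ℤ) : Prop :=
  (x' = x - 1 ∧ y' = y) ∨ (x' = x + 1 ∧ y' = y) ∨
  (x' = x ∧ y' = y - 1) ∨ (x' = x ∧ y' = y + 1)

/-- `P'(x',y',z'_b,z'_t)` is a pillar of `C` lying on a side of `P(x,y,z_b,z_t)`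
and adjacent to it. -/
def AdjPillar (C : Finset Cube) (x y zb zt x' y' z'b z't : ℤ) : Prop :=
  IsPillar C x' y' z'b z't ∧ IsSide x y x' y' ∧ z'b ≤ zt ∧ zb ≤ z't

/-- A cut cube of `C`: a cube whose removal disconnects `C`. -/
def IsCutCube (C : Finset Cube) (c : Cube) : Prop :=
  c ∈ C ∧ ¬ Conn (C.erase c)

/-- Condition (a): on some side the topmost adjacent pillar
`P'` satisfies `z'_t ≤ z_t - 2`. -/
def CondA (C : Finset Cube) (x y zb zt : ℤ) : Prop :=
  ∃ x' y' z'b z't, AdjPillar C x y zb zt x' y' z'b z't ∧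
    (∀ z''b z''t, AdjPillar C x y zb zt x' y' z''b z''t → z''t ≤ z't) ∧
    z't ≤ zt - 2

/-- Condition (b): some adjacent pillar `P'` has `z'_b > z_b` and
`(x, y, z'_b - 1)` is not a cut cube of `C`. -/
def CondB (C : Finset Cube) (x y zb zt : ℤ) : Prop :=
  ∃ x' y' z'b z't, AdjPillar C x y zb zt x' y' z'b z't ∧ zb < z'b ∧
    ¬ IsCutCube C (x, y, z'b - 1)

/-- Condition (c): `(x, y, z_b - 1) ∉ C` and some adjacent pillar has `z'_b < z_b`. -/
def CondC (C : Finset Cube) (x y zb zt : ℤ) : Prop :=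
  (x, y, zb - 1) ∉ C ∧
  ∃ x' y' z'b z't, AdjPillar C x y zb zt x' y' z'b z't ∧ z'b < zb

/-- Condition (d): `(x, y, z_b - 1) ∉ C` and on some side the bottommost adjacent
pillar `P'` satisfies `z'_b = z_b > 0`. -/
def CondD (C : Finset Cube) (x y zb zt : ℤ) : Prop :=
  (x, y, zb - 1) ∉ C ∧
  ∃ x' y' z'b z't, AdjPillar C x y zb zt x' y' z'b z't ∧
    (∀ z''b z''t, AdjPillar C x y zb zt x' y' z''b z''t → z'b ≤ z''b) ∧
    z'b = zb ∧ 0 < zb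

/-- Condition (e): at most one adjacent pillar on each side; there is an adjacent
pillar `P'` with `z'_b > z_b`, minimal such; and some other side `(x'', y'')` has
`(x'', y'', z_b) ∉ C`. -/
def CondE (C : Finset Cube) (x y zb zt : ℤ) : Prop :=
  (∀ x' y' z'b z't z''b z''t, AdjPillar C x y zb zt x' y' z'b z't →
      AdjPillar C x y zb zt x' y' z''b z''t → z'b = z''b ∧ z't = z''t) ∧
  ∃ x' y' z'b z't, AdjPillar C x y zb zt x' y' z'b z't ∧ zb < z'b ∧
    (∀ x'' y'' z''b z''t, AdjPillar C x y zb zt x'' y'' z''b z''t →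
      zb < z''b → z'b ≤ z''b) ∧
    ∃ x'' y'', IsSide x y x'' y'' ∧ (x'', y'') ≠ (x', y') ∧ (x'', y'', zb) ∉ C

/-- No non-cut subpillar of `C` satisfies any of the conditions (a)--(e). -/
def NoCondAE (C : Finset Cube) : Prop :=
  ∀ x y zb zt, IsSubpillar C x y zb zt →
    ConnOrEmpty (C \ pillarSet x y zb zt) →
    ¬ (CondA C x y zb zt ∨ CondB C x y zb zt ∨ CondC C x y zb zt ∨
       CondD C x y zb zt ∨ CondE C x y zb zt)

/-- Two sets of cubes are adjacent if some cube of one is adjacent to a cube of the other. -/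
def AdjSets (S T : Finset Cube) : Prop := ∃ a ∈ S, ∃ b ∈ T, cubeAdj a b

/-- The cubes of `C` with `z > 0`. -/
def Cpos (C : Finset Cube) : Finset Cube := C.filter fun c => 0 < c.2.2

/-- The cubes of `C` with `z = 0`. -/
def Czero (C : Finset Cube) : Finset Cube := C.filter fun c => c.2.2 = 0

/-- `H` is a connected component of `G_S`: nonempty, connected and closed under
adjacency within `S`. -/
def IsCompOf (S H : Finset Cube) : Prop :=
  H ⊆ S ∧ Conn H ∧ ∀ a ∈ H, ∀ b ∈ S, cubeAdj a b → b ∈ H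

/-- A high component of `C`: a connected component of `G_{C_{>0}}`. -/
def IsHighComp (C H : Finset Cube) : Prop := IsCompOf (Cpos C) H

/-- A low component of `C`: a connected component of `G_{C_0}`. -/
def IsLowComp (C L : Finset Cube) : Prop := IsCompOf (Czero C) L

/-- A move of type (f): it moves a cube with `z > 0`, strictly decreases the
potential, and results in a nonnegative configuration. -/
def MoveTypeF (C : Finset Cube) : Prop :=
  ∃ c c', IsMoveVia C c c' ∧ 0 < c.2.2 ∧
    Nonneg (insert c' (C.erase c)) ∧ Pot (insert c' (C.erase c)) < Pot C

/-- `R` is the root: the low component containing the origin if `(0,0,0) ∈ C`,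
an arbitrary low component otherwise. -/
def IsRoot (C R : Finset Cube) : Prop :=
  IsLowComp C R ∧ (((0 : ℤ), (0 : ℤ), (0 : ℤ)) ∈ C → ((0 : ℤ), (0 : ℤ), (0 : ℤ)) ∈ R)

/-- A clear low component `L` (w.r.t. root `R`): `C \ L` is connected, `L ≠ R`, and
some pillar of `C \ L` adjacent to `L` is non-cut in `C \ L`. -/
def IsClear (C R L : Finset Cube) : Prop :=
  IsLowComp C L ∧ Conn (C \ L) ∧ L ≠ R ∧
  ∃ x y zb zt, IsPillar (C \ L) x y zb zt ∧ AdjSets (pillarSet x y zb zt) L ∧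
    ConnOrEmpty ((C \ L) \ pillarSet x y zb zt)

/-- `P(x,y,z_b,z_t)` is a clearing pillar of the clear low component `L`. -/
def IsClearingPillar (C R L : Finset Cube) (x y zb zt : ℤ) : Prop :=
  IsClear C R L ∧ IsPillar (C \ L) x y zb zt ∧ AdjSets (pillarSet x y zb zt) L ∧
    ConnOrEmpty ((C \ L) \ pillarSet x y zb zt)

/-- A move of type (g): it moves a cube of some clear low component, strictly
decreases the potential, and results in a nonnegative configuration. -/
def MoveTypeG (C R : Finset Cube) : Prop :=
  ∃ L, IsClear C R L ∧ ∃ c c', IsMoveVia C c c' ∧ c ∈ L ∧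
    Nonneg (insert c' (C.erase c)) ∧ Pot (insert c' (C.erase c)) < Pot C

/-- The low-high graph `LH_C`: its vertices are the low and high components of `C`,
with edges between adjacent low and high components. -/
def LH (C : Finset Cube) : SimpleGraph (Finset Cube) where
  Adj S T := S ≠ T ∧ AdjSets S T ∧
    ((IsLowComp C S ∧ IsHighComp C T) ∨ (IsHighComp C S ∧ IsLowComp C T))
  symm := by
    constructor
    rintro S T ⟨hne, ⟨a, ha, b, hb, hab⟩, h⟩
    exact ⟨hne.symm, ⟨b, hb, a, ha, cubeAdj_symm hab⟩, h.symm.imp And.symm And.symm⟩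
  loopless := ⟨fun S h => h.1 rfl⟩

/-- `c` lies in the bounding box of `C`. -/
def InBBox (C : Finset Cube) (c : Cube) : Prop :=
  (∃ a ∈ C, a.1 ≤ c.1) ∧ (∃ a ∈ C, c.1 ≤ a.1) ∧
  (∃ a ∈ C, a.2.1 ≤ c.2.1) ∧ (∃ a ∈ C, c.2.1 ≤ a.2.1) ∧
  (∃ a ∈ C, a.2.2 ≤ c.2.2) ∧ (∃ a ∈ C, c.2.2 ≤ a.2.2)

lemma mem_pillarSet {x y zb zt : ℤ} {p : Cube} :
    p ∈ pillarSet x y zb zt ↔ p.1 = x ∧ p.2.1 = y ∧ zb ≤ p.2.2 ∧ p.2.2 ≤ zt := by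
  obtain ⟨a, b, c⟩ := p
  constructor
  · intro h
    simp only [pillarSet, Finset.mem_image, Finset.mem_Icc] at h
    obtain ⟨z, hz, hez⟩ := h
    obtain ⟨rfl, rfl, rfl⟩ : x = a ∧ y = b ∧ z = c := by
      simpa [Prod.ext_iff] using hez
    exact ⟨rfl, rfl, hz.1, hz.2⟩
  · rintro ⟨rfl, rfl, h1, h2⟩
    simp only [pillarSet, Finset.mem_image, Finset.mem_Icc]
    exact ⟨c, ⟨h1, h2⟩, rfl⟩

lemma mk_mem_pillarSet {x y zb zt : ℤ} {z : ℤ} (h3 : zb ≤ z) (h4 : z ≤ zt) :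
    ((x, y, z) : Cube) ∈ pillarSet x y zb zt :=
  mem_pillarSet.mpr ⟨rfl, rfl, h3, h4⟩

lemma gph_mono {S T : Finset Cube} (h : S ⊆ T) : gph S ≤ gph T :=
  fun _ _ ⟨ha, hb, hadj⟩ => ⟨h ha, h hb, hadj⟩

lemma adj_of_side {x y x' y' : ℤ} (h : IsSide x y x' y') (z : ℤ) :
    cubeAdj (x, y, z) (x', y', z) := by
  unfold cubeAdj
  rcases h with ⟨rfl, rfl⟩ | ⟨rfl, rfl⟩ | ⟨rfl, rfl⟩ | ⟨rfl, rfl⟩ <;> simp <;> omega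

lemma side_notin_pillar {x y x' y' : ℤ} (h : IsSide x y x' y') (z zb zt : ℤ) :
    (x', y', z) ∉ pillarSet x y zb zt := by
  intro hm
  obtain ⟨h1, h2, -, -⟩ := mem_pillarSet.mp hm
  simp only at h1 h2
  rcases h with ⟨hx, hy⟩ | ⟨hx, hy⟩ | ⟨hx, hy⟩ | ⟨hx, hy⟩ <;> omega

lemma reach_vert (S : Finset Cube) (x y u v : ℤ) (huv : u ≤ v)
    (h : ∀ z, u ≤ z → z ≤ v → (x, y, z) ∈ S) :
    (gph S).Reachable (x, y, u) (x, y, v) := by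
  obtain ⟨n, rfl⟩ : ∃ n : ℕ, v = u + n := ⟨(v - u).toNat, by omega⟩
  clear huv
  induction n with
  | zero =>
    simp only [Nat.cast_zero, add_zero]
    exact SimpleGraph.Reachable.refl _
  | succ n ih =>
    have h1 : (gph S).Reachable (x, y, u) (x, y, u + (n : ℤ)) :=
      ih (fun z hz1 hz2 => h z hz1 (by push_cast; push_cast at hz2; omega))
    have h2 : (gph S).Adj (x, y, u + (n : ℤ)) (x, y, u + ((n : ℕ) + 1 : ℕ)) := by
      refine ⟨h _ (by omega) (by push_cast; omega), h _ (by push_cast; omega) (by push_cast; omega), ?_⟩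
      unfold cubeAdj
      simp only
      push_cast
      omega
    exact h1.trans h2.reachable

lemma reach_vert' (S : Finset Cube) (x y z z' : ℤ)
    (h : ∀ u, min z z' ≤ u → u ≤ max z z' → (x, y, u) ∈ S) :
    (gph S).Reachable (x, y, z) (x, y, z') := by
  rcases le_total z z' with h' | h'
  · exact reach_vert S x y z z' h' (fun u hu1 hu2 => h u (by omega) (by omega))
  · exact (reach_vert S x y z' z h' (fun u hu1 hu2 => h u (by omega) (by omega))).symm

lemma connErase (C : Finset Cube) (x y zb zt w : ℤ)
    (hP : IsSubpillar C x y zb zt)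
    (hCP : Conn (C \ pillarSet x y zb zt))
    (hw1 : zb ≤ w) (hw2 : w ≤ zt)
    (hlow : zb < w → ∃ d ∈ C \ pillarSet x y zb zt,
      ∃ z', zb ≤ z' ∧ z' ≤ w - 1 ∧ cubeAdj (x, y, z') d)
    (hup : w < zt → ∃ d ∈ C \ pillarSet x y zb zt,
      ∃ z', w + 1 ≤ z' ∧ z' ≤ zt ∧ cubeAdj (x, y, z') d) :
    Conn (C.erase (x, y, w)) := by
  classical
  set P := pillarSet x y zb zt with hPd
  have hsubP : P ⊆ C := hP.2
  have hmemw : (x, y, w) ∈ P := mk_mem_pillarSet (hw1) (hw2)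
  set D := C.erase (x, y, w) with hDd
  have hsubD : C \ P ⊆ D := by
    intro d hd
    rw [Finset.mem_sdiff] at hd
    exact Finset.mem_erase.mpr ⟨fun h => hd.2 (h ▸ hmemw), hd.1⟩
  obtain ⟨d0, hd0⟩ := hCP.1
  have key : ∀ a ∈ D, (gph D).Reachable a d0 := by
    rintro ⟨a1, a2, a3⟩ ha
    rw [Finset.mem_erase] at ha
    by_cases hq : ((a1, a2, a3) : Cube) ∈ P
    · obtain ⟨h1, h2, h3, h4⟩ := mem_pillarSet.mp hq
      simp only at h1 h2 h3 h4
      subst h1; subst h2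
      have hz : a3 ≠ w := fun h => ha.1 (by rw [h])
      rcases lt_or_gt_of_ne hz with hlt | hgt
      · obtain ⟨d, hd, z', hz1, hz2, hadj⟩ := hlow (by omega)
        have hreach1 : (gph D).Reachable (a1, a2, a3) (a1, a2, z') := by
          apply reach_vert'
          intro u hu1 hu2
          have hu3 : zb ≤ u := by omega
          have hu4 : u ≤ w - 1 := by omega
          refine Finset.mem_erase.mpr ⟨?_, hsubP (mk_mem_pillarSet (hu3) (by omega))⟩
          simp only [ne_eq, Prod.mk.injEq]
          intro h; omega
        have hstep : (gph D).Adj (a1, a2, z') d := by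
          refine ⟨?_, hsubD hd, hadj⟩
          refine Finset.mem_erase.mpr ⟨?_, hsubP (mk_mem_pillarSet (hz1) (by omega))⟩
          simp only [ne_eq, Prod.mk.injEq]
          intro h; omega
        refine hreach1.trans (hstep.reachable.trans ?_)
        exact (hCP.2 d hd d0 hd0).mono (gph_mono hsubD)
      · obtain ⟨d, hd, z', hz1, hz2, hadj⟩ := hup (by omega)
        have hreach1 : (gph D).Reachable (a1, a2, a3) (a1, a2, z') := by
          apply reach_vert'
          intro u hu1 hu2
          have hu3 : w + 1 ≤ u := by omega
          have hu4 : u ≤ zt := by omega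
          refine Finset.mem_erase.mpr ⟨?_, hsubP (mk_mem_pillarSet (by omega) (hu4))⟩
          simp only [ne_eq, Prod.mk.injEq]
          intro h; omega
        have hstep : (gph D).Adj (a1, a2, z') d := by
          refine ⟨?_, hsubD hd, hadj⟩
          refine Finset.mem_erase.mpr ⟨?_, hsubP (mk_mem_pillarSet (by omega) (hz2))⟩
          simp only [ne_eq, Prod.mk.injEq]
          intro h; omega
        refine hreach1.trans (hstep.reachable.trans ?_)
        exact (hCP.2 d hd d0 hd0).mono (gph_mono hsubD)
    · have : ((a1, a2, a3) : Cube) ∈ C \ P := Finset.mem_sdiff.mpr ⟨ha.2, hq⟩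
      exact (hCP.2 _ this d0 hd0).mono (gph_mono hsubD)
  exact ⟨⟨d0, hsubD hd0⟩, fun a ha b hbm => (key a ha).trans (key b hbm).symm⟩

/-- Lemma 2: if none of conditions (a)--(e) hold for a non-cut
subpillar `P` of `C`, then `P` has no adjacent pillar with `z'_b > z_b`. -/
theorem lemma_no_higher_adjacent_pillar (C : Finset Cube) (hC : Conn C) (hN : Nonneg C)
    (x y zb zt : ℤ) (hP : IsSubpillar C x y zb zt)
    (hnc : ConnOrEmpty (C \ pillarSet x y zb zt))
    (ha : ¬ CondA C x y zb zt) (hb : ¬ CondB C x y zb zt)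
    (hc : ¬ CondC C x y zb zt) (hd : ¬ CondD C x y zb zt)
    (he : ¬ CondE C x y zb zt) :
    ¬ ∃ x' y' z'b z't, AdjPillar C x y zb zt x' y' z'b z't ∧ zb < z'b := by
  classical
  rintro ⟨x1, y1, b1, t1, hadj1, hlt1⟩
  obtain ⟨hzbzt, hPsub⟩ := hP
  have hc1 : (x1, y1, b1) ∈ C :=
    hadj1.1.1.2 (mk_mem_pillarSet (le_refl _) (hadj1.1.1.1))
  have hCP : Conn (C \ pillarSet x y zb zt) := by
    rcases hnc with h | h
    · exfalso
      have hmem : (x1, y1, b1) ∈ C \ pillarSet x y zb zt :=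
        Finset.mem_sdiff.mpr ⟨hc1, side_notin_pillar hadj1.2.1 b1 zb zt⟩
      rw [h] at hmem
      exact Finset.notMem_empty _ hmem
    · exact h
  have hex : ∃ n : ℕ, ∃ x' y' c t', AdjPillar C x y zb zt x' y' c t' ∧ c = zb + 1 + n :=
    ⟨(b1 - zb - 1).toNat, x1, y1, b1, t1, hadj1, by omega⟩
  obtain ⟨x2, y2, b2, t2, hadj2, hb2⟩ := Nat.find_spec hex
  have hmin : ∀ x' y' c t', AdjPillar C x y zb zt x' y' c t' → zb < c → b2 ≤ c := by
    intro x' y' c t' hq hlt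
    have := Nat.find_min' hex (m := (c - zb - 1).toNat) ⟨x', y', c, t', hq, by omega⟩
    omega
  have hlt2 : zb < b2 := by omega
  have hb2t2 : b2 ≤ t2 := hadj2.1.1.1
  have hb2zt : b2 ≤ zt := hadj2.2.2.1
  have hc2 : (x2, y2, b2) ∈ C :=
    hadj2.1.1.2 (mk_mem_pillarSet (le_refl _) (hb2t2))
  have hcut : ∀ x' y' c t', AdjPillar C x y zb zt x' y' c t' → zb < c →
      ¬ Conn (C.erase (x, y, c - 1)) := by
    intro x' y' c t' hq hlt hconn
    exact hb ⟨x', y', c, t', hq, hlt, fun hcc => hcc.2 hconn⟩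
  have hupW : ∃ d ∈ C \ pillarSet x y zb zt,
      ∃ z', (b2 - 1) + 1 ≤ z' ∧ z' ≤ zt ∧ cubeAdj (x, y, z') d :=
    ⟨(x2, y2, b2), Finset.mem_sdiff.mpr ⟨hc2, side_notin_pillar hadj2.2.1 _ _ _⟩,
      b2, by omega, hb2zt, adj_of_side hadj2.2.1 b2⟩
  rcases eq_or_lt_of_le (show zb + 1 ≤ b2 by omega) with hcase | hcase
  · -- b2 = zb + 1 : condition (b) holds
    apply hcut x2 y2 b2 t2 hadj2 hlt2
    have hwzb : b2 - 1 = zb := by omega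
    rw [hwzb]
    apply connErase C x y zb zt zb ⟨hzbzt, hPsub⟩ hCP le_rfl hzbzt
    · intro h; omega
    · intro _
      exact ⟨(x2, y2, b2), Finset.mem_sdiff.mpr ⟨hc2, side_notin_pillar hadj2.2.1 _ _ _⟩,
        b2, by omega, hb2zt, adj_of_side hadj2.2.1 b2⟩
  · -- zb + 2 ≤ b2 : condition (e) holds
    have hb2' : zb + 2 ≤ b2 := by omega
    have hcut2 := hcut x2 y2 b2 t2 hadj2 hlt2
    have hside : ∀ x' y', IsSide x y x' y' → ∀ z, zb ≤ z → z ≤ b2 - 2 → (x', y', z) ∉ C := by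
      intro x' y' hs z hz1 hz2 hmem
      apply hcut2
      apply connErase C x y zb zt (b2 - 1) ⟨hzbzt, hPsub⟩ hCP (by omega) (by omega)
      · intro _
        exact ⟨(x', y', z), Finset.mem_sdiff.mpr ⟨hmem, side_notin_pillar hs _ _ _⟩,
          z, hz1, by omega, adj_of_side hs z⟩
      · intro _; exact hupW
    have hbelow : (x, y, zb - 1) ∉ C := by
      intro hmem
      apply hcut2
      apply connErase C x y zb zt (b2 - 1) ⟨hzbzt, hPsub⟩ hCP (by omega) (by omega)
      · intro _
        refine ⟨(x, y, zb - 1), Finset.mem_sdiff.mpr ⟨hmem, ?_⟩, zb, le_rfl, by omega, ?_⟩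
        · intro h
          obtain ⟨-, -, h3, -⟩ := mem_pillarSet.mp h
          simp only at h3
          omega
        · unfold cubeAdj; simp; try omega
      · intro _; exact hupW
    have hbound : ∀ x' y' c t', AdjPillar C x y zb zt x' y' c t' → b2 ≤ c := by
      intro x' y' c t' hq
      rcases lt_or_ge zb c with h | h
      · exact hmin _ _ _ _ hq h
      · exfalso
        have hzbt : zb ≤ t' := hq.2.2.2
        have hmem : (x', y', zb) ∈ C := hq.1.1.2 (mk_mem_pillarSet (h) (hzbt))
        exact hside x' y' hq.2.1 zb le_rfl (by omega) hmem
    have hsep : ∀ x' y' c1 t1' c2 t2', AdjPillar C x y zb zt x' y' c1 t1' →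
        AdjPillar C x y zb zt x' y' c2 t2' → ¬ (t1' + 1 < c2) := by
      intro x' y' c1 t1' c2 t2' hq1 hq2 hgap
      have hc2b : b2 ≤ c2 := hbound _ _ _ _ hq2
      have hc1b : b2 ≤ c1 := hbound _ _ _ _ hq1
      have ht1 : c1 ≤ t1' := hq1.1.1.1
      have hc2zt : c2 ≤ zt := hq2.2.2.1
      apply hcut x' y' c2 t2' hq2 (by omega)
      apply connErase C x y zb zt (c2 - 1) ⟨hzbzt, hPsub⟩ hCP (by omega) (by omega)
      · intro _
        exact ⟨(x', y', t1'), Finset.mem_sdiff.mpr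
          ⟨hq1.1.1.2 (mk_mem_pillarSet (ht1) (le_rfl)),
            side_notin_pillar hq1.2.1 _ _ _⟩,
          t1', by omega, by omega, adj_of_side hq1.2.1 _⟩
      · intro _
        exact ⟨(x', y', c2), Finset.mem_sdiff.mpr
          ⟨hq2.1.1.2 (mk_mem_pillarSet (le_rfl) (hq2.1.1.1)),
            side_notin_pillar hq2.2.1 _ _ _⟩,
          c2, by omega, hc2zt, adj_of_side hq2.2.1 _⟩
    have huniq : ∀ x' y' c1 t1' c2 t2', AdjPillar C x y zb zt x' y' c1 t1' →
        AdjPillar C x y zb zt x' y' c2 t2' → c1 = c2 ∧ t1' = t2' := by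
      intro x' y' c1 t1' c2 t2' hq1 hq2
      have h12 := hsep _ _ _ _ _ _ hq1 hq2
      have h21 := hsep _ _ _ _ _ _ hq2 hq1
      push_neg at h12 h21
      have hc11 : c1 ≤ t1' := hq1.1.1.1
      have hc22 : c2 ≤ t2' := hq2.1.1.1
      have hcc : c1 = c2 := by
        by_contra hne
        rcases lt_or_gt_of_ne hne with h | h
        · exact hq2.1.2.1 (hq1.1.1.2 (mk_mem_pillarSet (by omega) (by omega)))
        · exact hq1.1.2.1 (hq2.1.1.2 (mk_mem_pillarSet (by omega) (by omega)))
      refine ⟨hcc, ?_⟩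
      by_contra hne
      rcases lt_or_gt_of_ne hne with h | h
      · exact hq1.1.2.2 (hq2.1.1.2 (mk_mem_pillarSet (by omega) (by omega)))
      · exact hq2.1.2.2 (hq1.1.1.2 (mk_mem_pillarSet (by omega) (by omega)))
    apply he
    refine ⟨fun x' y' a b c d h1 h2 => huniq _ _ _ _ _ _ h1 h2,
      x2, y2, b2, t2, hadj2, hlt2, fun x'' y'' c d hq h => hmin _ _ _ _ hq h, ?_⟩
    rcases hadj2.2.1 with ⟨hx, hy⟩ | ⟨hx, hy⟩ | ⟨hx, hy⟩ | ⟨hx, hy⟩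
    · exact ⟨x + 1, y, Or.inr (Or.inl ⟨rfl, rfl⟩),
        by simp only [ne_eq, Prod.mk.injEq, not_and]; intro h; omega,
        hside _ _ (Or.inr (Or.inl ⟨rfl, rfl⟩)) zb le_rfl (by omega)⟩
    · exact ⟨x - 1, y, Or.inl ⟨rfl, rfl⟩,
        by simp only [ne_eq, Prod.mk.injEq, not_and]; intro h; omega,
        hside _ _ (Or.inl ⟨rfl, rfl⟩) zb le_rfl (by omega)⟩
    · exact ⟨x - 1, y, Or.inl ⟨rfl, rfl⟩,
        by simp only [ne_eq, Prod.mk.injEq, not_and]; intro h; omega,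
        hside _ _ (Or.inl ⟨rfl, rfl⟩) zb le_rfl (by omega)⟩
    · exact ⟨x - 1, y, Or.inl ⟨rfl, rfl⟩,
        by simp only [ne_eq, Prod.mk.injEq, not_and]; intro h; omega,
        hside _ _ (Or.inl ⟨rfl, rfl⟩) zb le_rfl (by omega)⟩
end

section
/- Let C be a connected nonnegative configuration such that no non-cut subpillar of C satisfies any of conditions (a)–(e). Then for every non-cut pillar P = P(x,y,z_b,z_t) of C and every pillar P' = P'(x',y',z'_b,z'_t) adjacent to P, one has z_b = z'_b = 0. -/
/-! ### Auxiliary lemmas -/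

open Finset in
lemma mem_pillarSet_s5 {x y a b : ℤ} {c : Cube} :
    c ∈ pillarSet x y a b ↔ c.1 = x ∧ c.2.1 = y ∧ a ≤ c.2.2 ∧ c.2.2 ≤ b := by
  obtain ⟨cx, cy, cz⟩ := c
  simp only [pillarSet, Finset.mem_image, Finset.mem_Icc, Prod.mk.injEq]
  constructor
  · rintro ⟨z, ⟨h1, h2⟩, rfl, rfl, rfl⟩; exact ⟨rfl, rfl, h1, h2⟩
  · rintro ⟨rfl, rfl, h1, h2⟩; exact ⟨cz, ⟨h1, h2⟩, rfl, rfl, rfl⟩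

lemma mem_pillarSet' {x y a b z : ℤ} (h1 : a ≤ z) (h2 : z ≤ b) :
    ((x, y, z) : Cube) ∈ pillarSet x y a b :=
  mem_pillarSet_s5.2 ⟨rfl, rfl, h1, h2⟩

lemma subpillar_mem {C : Finset Cube} {x y a b : ℤ} (h : IsSubpillar C x y a b)
    {z : ℤ} (h1 : a ≤ z) (h2 : z ≤ b) : ((x, y, z) : Cube) ∈ C :=
  h.2 (mem_pillarSet' h1 h2)

lemma side_ne {x y u v : ℤ} (h : IsSide x y u v) : ¬(u = x ∧ v = y) := by
  rcases h with ⟨h1, h2⟩ | ⟨h1, h2⟩ | ⟨h1, h2⟩ | ⟨h1, h2⟩ <;> omega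

lemma side_adj {x y u v h : ℤ} (hs : IsSide x y u v) :
    cubeAdj ((x, y, h) : Cube) ((u, v, h) : Cube) := by
  unfold cubeAdj
  rcases hs with ⟨h1, h2⟩ | ⟨h1, h2⟩ | ⟨h1, h2⟩ | ⟨h1, h2⟩ <;> subst h1 <;> subst h2 <;>
    simp <;> omega

lemma exists_other_side (x y u v : ℤ) (h : IsSide x y u v) :
    ∃ u' v', IsSide x y u' v' ∧ ((u', v') : ℤ × ℤ) ≠ (u, v) := by
  rcases h with ⟨h1, h2⟩ | ⟨h1, h2⟩ | ⟨h1, h2⟩ | ⟨h1, h2⟩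
  · exact ⟨x + 1, y, Or.inr (Or.inl ⟨rfl, rfl⟩), by simp [Prod.ext_iff]; omega⟩
  · exact ⟨x - 1, y, Or.inl ⟨rfl, rfl⟩, by simp [Prod.ext_iff]; omega⟩
  · exact ⟨x, y + 1, Or.inr (Or.inr (Or.inr ⟨rfl, rfl⟩)), by simp [Prod.ext_iff]; omega⟩
  · exact ⟨x, y - 1, Or.inr (Or.inr (Or.inl ⟨rfl, rfl⟩)), by simp [Prod.ext_iff]; omega⟩

lemma reach_mono {S T : Finset Cube} (h : S ⊆ T) {a b : Cube}
    (hr : (gph S).Reachable a b) : (gph T).Reachable a b := by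
  refine hr.mono ?_
  intro u v huv
  exact ⟨h huv.1, h huv.2.1, huv.2.2⟩

lemma pillar_reach (x y a b : ℤ) : ∀ n : ℕ, ∀ z : ℤ, a ≤ z → z + n ≤ b →
    (gph (pillarSet x y a b)).Reachable ((x, y, z) : Cube) ((x, y, z + n) : Cube) := by
  intro n
  induction n with
  | zero =>
    intro z h1 h2
    rw [show z + ((0 : ℕ) : ℤ) = z by omega]
  | succ n ih =>
    intro z h1 h2
    have e1 : ((x, y, z) : Cube) ∈ pillarSet x y a b := mem_pillarSet' h1 (by omega)
    have e2 : ((x, y, z + 1) : Cube) ∈ pillarSet x y a b :=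
      mem_pillarSet' (by omega) (by omega)
    have adj : (gph (pillarSet x y a b)).Adj (x, y, z) (x, y, z + 1) := by
      refine ⟨e1, e2, ?_⟩
      unfold cubeAdj; simp
    have h3 := ih (z + 1) (by omega) (by omega)
    rw [show z + 1 + (n : ℤ) = z + ((n : ℕ) + 1 : ℕ) by push_cast; ring] at h3
    exact adj.reachable.trans h3

lemma conn_pillarSet (x y : ℤ) {a b : ℤ} (h : a ≤ b) : Conn (pillarSet x y a b) := by
  constructor
  · exact ⟨(x, y, a), mem_pillarSet' le_rfl h⟩
  · intro u hu v hv
    obtain ⟨hu1, hu2, hu3, hu4⟩ := mem_pillarSet_s5.1 hu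
    obtain ⟨hv1, hv2, hv3, hv4⟩ := mem_pillarSet_s5.1 hv
    obtain ⟨ux, uy, uz⟩ := u; obtain ⟨vx, vy, vz⟩ := v
    simp only at hu1 hu2 hu3 hu4 hv1 hv2 hv3 hv4
    rw [hu1, hu2, hv1, hv2]
    rcases le_total uz vz with hle | hle
    · have := pillar_reach x y a b (vz - uz).toNat uz hu3 (by omega)
      rwa [show uz + ((vz - uz).toNat : ℤ) = vz by omega] at this
    · have := pillar_reach x y a b (uz - vz).toNat vz hv3 (by omega)
      rw [show vz + ((uz - vz).toNat : ℤ) = uz by omega] at this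
      exact this.symm

lemma conn_union {A B : Finset Cube} (hA : Conn A) (hB : Conn B) {a b : Cube}
    (ha : a ∈ A) (hb : b ∈ B) (hadj : cubeAdj a b) : Conn (A ∪ B) := by
  have hAs : A ⊆ A ∪ B := Finset.subset_union_left
  have hBs : B ⊆ A ∪ B := Finset.subset_union_right
  have edge : (gph (A ∪ B)).Adj a b := ⟨hAs ha, hBs hb, hadj⟩
  constructor
  · exact ⟨a, hAs ha⟩
  · intro u hu v hv
    have key : ∀ w ∈ A ∪ B, (gph (A ∪ B)).Reachable w a := by
      intro w hw
      rcases Finset.mem_union.1 hw with hw | hw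
      · exact reach_mono hAs (hA.2 w hw a ha)
      · exact (reach_mono hBs (hB.2 w hw b hb)).trans edge.symm.reachable
    exact (key u hu).trans (key v hv).symm

lemma pillar_sub_mem {C : Finset Cube} {u v p q : ℤ} (h : IsPillar C u v p q)
    {w : ℤ} (h1 : p ≤ w) (h2 : w ≤ q) : ((u, v, w) : Cube) ∈ C :=
  subpillar_mem h.1 h1 h2

lemma pillar_bot_mem {C : Finset Cube} {u v p q : ℤ} (h : IsPillar C u v p q) :
    ((u, v, p) : Cube) ∈ C := pillar_sub_mem h le_rfl h.1.1

lemma pillar_eq {C : Finset Cube} {u v p q p' q' : ℤ} (hA : IsPillar C u v p q)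
    (hB : IsPillar C u v p' q') {w : ℤ} (h1 : p ≤ w) (h2 : w ≤ q) (h3 : p' ≤ w)
    (h4 : w ≤ q') : p = p' ∧ q = q' := by
  constructor
  · by_contra hne
    rcases lt_or_gt_of_ne hne with hlt | hlt
    · exact hB.2.1 (pillar_sub_mem hA (by omega) (by omega))
    · exact hA.2.1 (pillar_sub_mem hB (by omega) (by omega))
  · by_contra hne
    rcases lt_or_gt_of_ne hne with hlt | hlt
    · exact hA.2.2 (pillar_sub_mem hB (by omega) (by omega))
    · exact hB.2.2 (pillar_sub_mem hA (by omega) (by omega))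

lemma exists_above {C : Finset Cube} {u v z : ℤ} (h : ((u, v, z) : Cube) ∈ C) :
    ∃ q, z ≤ q ∧ (∀ w, z ≤ w → w ≤ q → ((u, v, w) : Cube) ∈ C) ∧
      ((u, v, q + 1) : Cube) ∉ C := by
  classical
  have hex : ∃ n : ℕ, ((u, v, z + n + 1) : Cube) ∉ C := by
    by_contra hall
    push_neg at hall
    have hinj : Function.Injective (fun n : ℕ => ((u, v, z + n + 1) : Cube)) := by
      intro m n hmn
      simp only [Prod.mk.injEq] at hmn
      omega
    exact (Set.infinite_of_injective_forall_mem hinj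
      (fun n => hall n : ∀ n : ℕ, ((u, v, z + n + 1) : Cube) ∈ (↑C : Set Cube)))
      C.finite_toSet
  refine ⟨z + Nat.find hex, by omega, ?_, ?_⟩
  · intro w hw1 hw2
    by_cases hwz : w = z
    · rwa [hwz]
    · have hlt : (w - z - 1).toNat < Nat.find hex := by omega
      have := Nat.find_min hex hlt
      simp only [not_not] at this
      rwa [show z + ((w - z - 1).toNat : ℤ) + 1 = w by omega] at this
  · have := Nat.find_spec hex
    rwa [show z + (Nat.find hex : ℤ) + 1 = z + (Nat.find hex : ℤ) + 1 by ring]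

lemma exists_below {C : Finset Cube} {u v z : ℤ} (h : ((u, v, z) : Cube) ∈ C) :
    ∃ p, p ≤ z ∧ (∀ w, p ≤ w → w ≤ z → ((u, v, w) : Cube) ∈ C) ∧
      ((u, v, p - 1) : Cube) ∉ C := by
  classical
  have hex : ∃ n : ℕ, ((u, v, z - n - 1) : Cube) ∉ C := by
    by_contra hall
    push_neg at hall
    have hinj : Function.Injective (fun n : ℕ => ((u, v, z - n - 1) : Cube)) := by
      intro m n hmn
      simp only [Prod.mk.injEq] at hmn
      omega
    exact (Set.infinite_of_injective_forall_mem hinj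
      (fun n => hall n : ∀ n : ℕ, ((u, v, z - n - 1) : Cube) ∈ (↑C : Set Cube)))
      C.finite_toSet
  refine ⟨z - Nat.find hex, by omega, ?_, ?_⟩
  · intro w hw1 hw2
    by_cases hwz : w = z
    · rwa [hwz]
    · have hlt : (z - w - 1).toNat < Nat.find hex := by omega
      have := Nat.find_min hex hlt
      simp only [not_not] at this
      rwa [show z - ((z - w - 1).toNat : ℤ) - 1 = w by omega] at this
  · have := Nat.find_spec hex
    rwa [show z - (Nat.find hex : ℤ) - 1 = z - Nat.find hex - 1 by ring]

lemma exists_pillar_through {C : Finset Cube} {u v z : ℤ} (h : ((u, v, z) : Cube) ∈ C) :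
    ∃ p q, IsPillar C u v p q ∧ p ≤ z ∧ z ≤ q := by
  obtain ⟨q, hq1, hq2, hq3⟩ := exists_above h
  obtain ⟨p, hp1, hp2, hp3⟩ := exists_below h
  refine ⟨p, q, ⟨⟨by omega, ?_⟩, hp3, hq3⟩, hp1, hq1⟩
  intro c hc
  obtain ⟨h1, h2, h3, h4⟩ := mem_pillarSet_s5.1 hc
  obtain ⟨cx, cy, cz⟩ := c
  simp only at h1 h2 h3 h4
  rw [h1, h2]
  rcases le_total cz z with hle | hle
  · exact hp2 cz h3 hle
  · exact hq2 cz hle h4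

lemma exists_min_bot {C : Finset Cube} {x y zb zt : ℤ}
    (h : ∃ a b c d, AdjPillar C x y zb zt a b c d ∧ zb < c) :
    ∃ a b c d, AdjPillar C x y zb zt a b c d ∧ zb < c ∧
      ∀ a' b' c' d', AdjPillar C x y zb zt a' b' c' d' → zb < c' → c ≤ c' := by
  classical
  obtain ⟨a, b, c, d, hadj, hc⟩ := h
  set S := (C.image fun p : Cube => p.2.2).filter
      (fun z => zb < z ∧ ∃ a b d, AdjPillar C x y zb zt a b z d) with hS
  have hmem : ∀ {a b c d : ℤ}, AdjPillar C x y zb zt a b c d → zb < c → c ∈ S := by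
    intro a b c d hadj hc
    exact Finset.mem_filter.2
      ⟨Finset.mem_image.2 ⟨(a, b, c), pillar_bot_mem hadj.1, rfl⟩, hc, a, b, d, hadj⟩
  have hne : S.Nonempty := ⟨c, hmem hadj hc⟩
  have hmin := Finset.mem_filter.1 (S.min'_mem hne)
  obtain ⟨-, hlt, a', b', d', hadj'⟩ := hmin
  exact ⟨a', b', S.min' hne, d', hadj', hlt,
    fun a'' b'' c'' d'' ha hc => S.min'_le _ (hmem ha hc)⟩

lemma pillarSet_mono {x y a b a' b' : ℤ} (h1 : a ≤ a') (h2 : b' ≤ b) :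
    pillarSet x y a' b' ⊆ pillarSet x y a b := by
  intro c hc
  obtain ⟨e1, e2, e3, e4⟩ := mem_pillarSet_s5.1 hc
  exact mem_pillarSet_s5.2 ⟨e1, e2, by omega, by omega⟩

lemma sdiff_pillar_eq {C : Finset Cube} {x y zb zt zs : ℤ}
    (hsub : pillarSet x y zb zt ⊆ C) (h1 : zb ≤ zs) (h2 : zs ≤ zt) :
    C \ pillarSet x y zb zs = pillarSet x y (zs + 1) zt ∪ (C \ pillarSet x y zb zt) := by
  ext c
  obtain ⟨cx, cy, cz⟩ := c
  simp only [Finset.mem_sdiff, Finset.mem_union, mem_pillarSet_s5]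
  constructor
  · rintro ⟨hc, hq⟩
    by_cases hcol : cx = x ∧ cy = y
    · obtain ⟨rfl, rfl⟩ := hcol
      by_cases hr : zb ≤ cz ∧ cz ≤ zt
      · have hnq : ¬(zb ≤ cz ∧ cz ≤ zs) := fun hh => hq ⟨rfl, rfl, hh.1, hh.2⟩
        exact Or.inl ⟨rfl, rfl, by omega, hr.2⟩
      · exact Or.inr ⟨hc, fun hh => hr ⟨hh.2.2.1, hh.2.2.2⟩⟩
    · exact Or.inr ⟨hc, fun hh => hcol ⟨hh.1, hh.2.1⟩⟩
  · rintro (⟨rfl, rfl, h3, h4⟩ | ⟨hc, hq⟩)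
    · exact ⟨hsub (mem_pillarSet' (by omega) h4), fun hh => by omega⟩
    · exact ⟨hc, fun hh => hq ⟨hh.1, hh.2.1, hh.2.2.1, hh.2.2.2.trans h2⟩⟩

lemma erase_pillar_eq {C : Finset Cube} {x y zb zt β : ℤ}
    (hsub : pillarSet x y zb zt ⊆ C) (h1 : zb < β) (h2 : β ≤ zt) :
    C.erase (x, y, β - 1) =
      pillarSet x y zb (β - 2) ∪ (pillarSet x y β zt ∪ (C \ pillarSet x y zb zt)) := by
  ext c
  obtain ⟨cx, cy, cz⟩ := c
  simp only [Finset.mem_erase, Finset.mem_union, Finset.mem_sdiff, mem_pillarSet_s5,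
    Prod.mk.injEq, ne_eq]
  constructor
  · rintro ⟨hne, hc⟩
    by_cases hcol : cx = x ∧ cy = y
    · obtain ⟨rfl, rfl⟩ := hcol
      by_cases hr : zb ≤ cz ∧ cz ≤ zt
      · have hnz : cz ≠ β - 1 := fun hh => hne ⟨rfl, rfl, hh⟩
        by_cases hlow : cz ≤ β - 2
        · exact Or.inl ⟨rfl, rfl, hr.1, hlow⟩
        · exact Or.inr (Or.inl ⟨rfl, rfl, by omega, hr.2⟩)
      · exact Or.inr (Or.inr ⟨hc, fun hh => hr ⟨hh.2.2.1, hh.2.2.2⟩⟩)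
    · exact Or.inr (Or.inr ⟨hc, fun hh => hcol ⟨hh.1, hh.2.1⟩⟩)
  · rintro (⟨rfl, rfl, h3, h4⟩ | ⟨rfl, rfl, h3, h4⟩ | ⟨hc, hq⟩)
    · exact ⟨fun hh => absurd hh.2.2 (by omega), hsub (mem_pillarSet' h3 (by omega))⟩
    · exact ⟨fun hh => absurd hh.2.2 (by omega), hsub (mem_pillarSet' (by omega) h4)⟩
    · refine ⟨fun hh => ?_, hc⟩
      obtain ⟨he1, he2, he3⟩ := hh
      exact hq ⟨he1, he2, by omega, by omega⟩

lemma caseB_core {C : Finset Cube} (hae : NoCondAE C) {x y zb zt : ℤ}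
    (hP : IsPillar C x y zb zt)
    (hconnP : Conn (C \ pillarSet x y zb zt))
    {xs ys zs ts : ℤ} (hadjs : AdjPillar C x y zb zt xs ys zs ts) (hlts : zb < zs)
    (hminall : ∀ a b c d, AdjPillar C x y zb zt a b c d → zs ≤ c)
    (hsideC : ∀ u v, IsSide x y u v → ((u, v, zb) : Cube) ∉ C)
    {u v c1 d1 c2 d2 : ℤ}
    (h1 : AdjPillar C x y zb zt u v c1 d1) (h2 : AdjPillar C x y zb zt u v c2 d2)
    (hd : d1 < c2) : False := by
  have hc1d1 : c1 ≤ d1 := h1.1.1.1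
  have hgap : d1 + 2 ≤ c2 := by
    by_contra hcon
    have he : c2 = d1 + 1 := by omega
    exact h1.1.2.2 (he ▸ pillar_bot_mem h2.1)
  have hzs1 : zs ≤ c1 := hminall _ _ _ _ h1
  have hc2zt : c2 ≤ zt := h2.2.2.1
  have hzszt : zs + 1 ≤ zt := by omega
  have hzszt' : zs ≤ zt := by omega
  have hsubQ : IsSubpillar C x y zb zs :=
    ⟨le_of_lt hlts, fun c hc => hP.1.2 (pillarSet_mono le_rfl hzszt' hc)⟩
  have hbr1 : ((x, y, c2) : Cube) ∈ pillarSet x y (zs + 1) zt :=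
    mem_pillarSet' (by omega) hc2zt
  have hbr2 : ((u, v, c2) : Cube) ∈ C \ pillarSet x y zb zt := by
    refine Finset.mem_sdiff.2 ⟨pillar_bot_mem h2.1, fun hm => ?_⟩
    exact side_ne h2.2.1 ⟨(mem_pillarSet_s5.1 hm).1, (mem_pillarSet_s5.1 hm).2.1⟩
  have hconnQ : Conn (C \ pillarSet x y zb zs) := by
    rw [sdiff_pillar_eq hP.1.2 (le_of_lt hlts) hzszt']
    exact conn_union (conn_pillarSet x y hzszt) hconnP hbr1 hbr2 (side_adj h2.2.1)
  have hadjQ : ∀ {a b c d : ℤ}, AdjPillar C x y zb zs a b c d →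
      AdjPillar C x y zb zt a b c d ∧ c = zs := by
    rintro a b c d ⟨hpil, hside, hle1, hle2⟩
    have hadj' : AdjPillar C x y zb zt a b c d := ⟨hpil, hside, le_trans hle1 hzszt', hle2⟩
    exact ⟨hadj', le_antisymm hle1 (hminall _ _ _ _ hadj')⟩
  have hclause1 : ∀ x' y' z'b z't z''b z''t, AdjPillar C x y zb zs x' y' z'b z't →
      AdjPillar C x y zb zs x' y' z''b z''t → z'b = z''b ∧ z't = z''t := by
    intro a b e f g k he hg
    obtain ⟨he', hez⟩ := hadjQ he
    obtain ⟨hg', hgz⟩ := hadjQ hg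
    have hef : e ≤ f := he'.1.1.1
    have hgk : g ≤ k := hg'.1.1.1
    exact pillar_eq he'.1 hg'.1 (w := zs) (by omega) (by omega) (by omega) (by omega)
  have hadjsQ : AdjPillar C x y zb zs xs ys zs ts := by
    have : zs ≤ ts := hadjs.1.1.1
    exact ⟨hadjs.1, hadjs.2.1, le_rfl, by omega⟩
  obtain ⟨u'', v'', hs'', hne''⟩ := exists_other_side x y xs ys hadjs.2.1
  have hcondE : CondE C x y zb zs :=
    ⟨hclause1, xs, ys, zs, ts, hadjsQ, hlts,
      fun a b c d hadj _ => le_of_eq (hadjQ hadj).2.symm,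
      u'', v'', hs'', hne'', hsideC u'' v'' hs''⟩
  exact hae x y zb zs hsubQ (Or.inr hconnQ)
    (Or.inr (Or.inr (Or.inr (Or.inr hcondE))))

lemma keyH {C : Finset Cube} (hae : NoCondAE C) {x y zb zt : ℤ}
    (hP : IsPillar C x y zb zt) (hnc : ConnOrEmpty (C \ pillarSet x y zb zt))
    (hex : ∃ a b c d, AdjPillar C x y zb zt a b c d)
    (hall : ∀ a b c d, AdjPillar C x y zb zt a b c d → zb < c) : False := by
  obtain ⟨a0, b0, c0, d0, hadj0⟩ := hex
  obtain ⟨xs, ys, zs, ts, hadjs, hlts, hmins⟩ :=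
    exists_min_bot ⟨a0, b0, c0, d0, hadj0, hall _ _ _ _ hadj0⟩
  have hminall : ∀ a b c d, AdjPillar C x y zb zt a b c d → zs ≤ c :=
    fun a b c d h => hmins a b c d h (hall _ _ _ _ h)
  have hsideC : ∀ u v, IsSide x y u v → ((u, v, zb) : Cube) ∉ C := by
    intro u v hs hmem
    obtain ⟨p, q, hpil, hp, hq⟩ := exists_pillar_through hmem
    have hzbzt : zb ≤ zt := hP.1.1
    have hadj : AdjPillar C x y zb zt u v p q := ⟨hpil, hs, by omega, by omega⟩
    exact absurd (hall _ _ _ _ hadj) (by omega)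
  have hCPne : ((xs, ys, zs) : Cube) ∈ C \ pillarSet x y zb zt := by
    refine Finset.mem_sdiff.2 ⟨pillar_bot_mem hadjs.1, fun hm => ?_⟩
    exact side_ne hadjs.2.1 ⟨(mem_pillarSet_s5.1 hm).1, (mem_pillarSet_s5.1 hm).2.1⟩
  have hconnP : Conn (C \ pillarSet x y zb zt) := by
    rcases hnc with he | hc
    · rw [he] at hCPne; exact absurd hCPne (Finset.notMem_empty _)
    · exact hc
  by_cases hA : ∀ x' y' z'b z't z''b z''t, AdjPillar C x y zb zt x' y' z'b z't →
      AdjPillar C x y zb zt x' y' z''b z''t → z'b = z''b ∧ z't = z''t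
  · obtain ⟨u'', v'', hs'', hne''⟩ := exists_other_side x y xs ys hadjs.2.1
    have hcondE : CondE C x y zb zt :=
      ⟨hA, xs, ys, zs, ts, hadjs, hlts,
        fun a b c d hadj hlt => hmins a b c d hadj hlt,
        u'', v'', hs'', hne'', hsideC u'' v'' hs''⟩
    exact hae x y zb zt hP.1 hnc (Or.inr (Or.inr (Or.inr (Or.inr hcondE))))
  · push_neg at hA
    obtain ⟨u, v, c1, d1, c2, d2, h1, h2, hne⟩ := hA
    have hnand : ¬(c1 = c2 ∧ d1 = d2) := by tauto
    have hdisj : d1 < c2 ∨ d2 < c1 := by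
      by_contra hcon
      push_neg at hcon
      have hc1d1 : c1 ≤ d1 := h1.1.1.1
      have hc2d2 : c2 ≤ d2 := h2.1.1.1
      exact hnand (pillar_eq h1.1 h2.1 (w := max c1 c2) (le_max_left _ _)
        (by omega) (le_max_right _ _) (by omega))
    rcases hdisj with hd | hd
    · exact caseB_core hae hP hconnP hadjs hlts hminall hsideC h1 h2 hd
    · exact caseB_core hae hP hconnP hadjs hlts hminall hsideC h2 h1 hd

/-- if no non-cut subpillar of `C` satisfies any of conditions
(a)--(e), then for every non-cut pillar `P` of `C` and every adjacent pillar `P'`,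
both bottoms lie at `z = 0`. -/
theorem all_noncut_pillars_grounded (C : Finset Cube) (hC : Conn C) (hN : Nonneg C)
    (hae : NoCondAE C)
    (x y zb zt : ℤ) (hP : IsPillar C x y zb zt)
    (hnc : ConnOrEmpty (C \ pillarSet x y zb zt))
    (x' y' z'b z't : ℤ) (hP' : AdjPillar C x y zb zt x' y' z'b z't) :
    zb = 0 ∧ z'b = 0 := by
  have hzbzt : zb ≤ zt := hP.1.1
  have hzb0 : 0 ≤ zb := (hN _ (pillar_bot_mem hP)).2.2
  have hzpb0 : 0 ≤ z'b := (hN _ (pillar_bot_mem hP'.1)).2.2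
  have hnone := hae x y zb zt hP.1 hnc
  have hnB : ¬ CondB C x y zb zt := fun h => hnone (Or.inr (Or.inl h))
  have hnC : ¬ CondC C x y zb zt := fun h => hnone (Or.inr (Or.inr (Or.inl h)))
  have hnD : ¬ CondD C x y zb zt := fun h => hnone (Or.inr (Or.inr (Or.inr (Or.inl h))))
  have hboall : ∀ a b c d, AdjPillar C x y zb zt a b c d → zb ≤ c := by
    intro a b c d h
    by_contra hcon
    exact hnC ⟨hP.2.1, a, b, c, d, h, by omega⟩
  have hzb : zb = 0 := by
    by_contra hzbne
    have hpos : 0 < zb := by omega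
    have hall : ∀ a b c d, AdjPillar C x y zb zt a b c d → zb < c := by
      intro a b c d h
      rcases lt_or_eq_of_le (hboall a b c d h) with hlt | heq
      · exact hlt
      · refine absurd (show CondD C x y zb zt from
          ⟨hP.2.1, a, b, c, d, h, fun e f he => ?_, heq.symm, hpos⟩) hnD
        have := hboall a b e f he
        omega
    exact keyH hae hP hnc ⟨x', y', z'b, z't, hP'⟩ hall
  subst hzb
  refine ⟨rfl, ?_⟩
  by_contra hzpbne
  have hzpbpos : 0 < z'b := by omega
  by_cases hall : ∀ a b c d, AdjPillar C x y 0 zt a b c d → 0 < c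
  · exact keyH hae hP hnc ⟨x', y', z'b, z't, hP'⟩ hall
  · push_neg at hall
    obtain ⟨x0, y0, c0, d0, hadj0, hc0⟩ := hall
    have hc0z : c0 = 0 := le_antisymm hc0 ((hN _ (pillar_bot_mem hadj0.1)).2.2)
    obtain ⟨xβ, yβ, β, βt, hadjβ, hβpos, hβmin⟩ :=
      exists_min_bot ⟨x', y', z'b, z't, hP', hzpbpos⟩
    have hβzt : β ≤ zt := hadjβ.2.2.1
    have hCPne : ((xβ, yβ, β) : Cube) ∈ C \ pillarSet x y 0 zt := by
      refine Finset.mem_sdiff.2 ⟨pillar_bot_mem hadjβ.1, fun hm => ?_⟩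
      exact side_ne hadjβ.2.1 ⟨(mem_pillarSet_s5.1 hm).1, (mem_pillarSet_s5.1 hm).2.1⟩
    have hconnP : Conn (C \ pillarSet x y 0 zt) := by
      rcases hnc with he | hc
      · rw [he] at hCPne; exact absurd hCPne (Finset.notMem_empty _)
      · exact hc
    have hbr1a : ((x, y, β) : Cube) ∈ pillarSet x y β zt := mem_pillarSet' le_rfl hβzt
    have hconnUp : Conn (pillarSet x y β zt ∪ (C \ pillarSet x y 0 zt)) :=
      conn_union (conn_pillarSet x y hβzt) hconnP hbr1a hCPne (side_adj hadjβ.2.1)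
    have hconnE : Conn (C.erase ((x, y, β - 1) : Cube)) := by
      rw [erase_pillar_eq hP.1.2 hβpos hβzt]
      by_cases hlow : 0 ≤ β - 2
      · refine conn_union (conn_pillarSet x y hlow) hconnUp
          (a := ((x, y, 0) : Cube)) (b := ((x0, y0, 0) : Cube))
          (mem_pillarSet' le_rfl hlow) ?_ (side_adj hadj0.2.1)
        refine Finset.mem_union_right _ (Finset.mem_sdiff.2
          ⟨hc0z ▸ pillar_bot_mem hadj0.1, fun hm => ?_⟩)
        exact side_ne hadj0.2.1 ⟨(mem_pillarSet_s5.1 hm).1, (mem_pillarSet_s5.1 hm).2.1⟩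
      · have hemp : pillarSet x y 0 (β - 2) = ∅ := by
          unfold pillarSet
          rw [Finset.Icc_eq_empty (by omega), Finset.image_empty]
        rw [hemp, Finset.empty_union]
        exact hconnUp
    exact hnB ⟨xβ, yβ, β, βt, hadjβ, hβpos, fun hcut => hcut.2 hconnE⟩
end
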